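/- arXiv:2401.13007 — 3 statements merged into one kernel-verified Lean document; each statement's English description precedes it below -/
import Mathlib

section
/- If (X_1, X_2, Y_1, Y_2) has joint density f(x_1,x_2,y_1,y_2) = 1{0≤x_1≤x_2≤1}·1{1<y_1≤y_2≤2} + 1{0≤x_2<x_1≤1}·1{1<y_2<y_1≤2} + 1{1<x_1≤x_2≤2}·1{0≤y_1≤y_2≤1} + 1{1<x_2<x_1≤2}·1{0≤y_2<y_1≤1}, then P((X_1 ≤ X_2 and Y_1 ≤ Y_2) or (X_2 < X_1 and Y_2 < Y_1)) = 1, i.e., the ordinal patterns of (X_1,X_2) and (Y_1,Y_2) coincide almost surely. -/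
open MeasureTheory

noncomputable def ind (P : Prop) : ℝ := by classical exact if P then 1 else 0

noncomputable def fdens (x₁ x₂ y₁ y₂ : ℝ) : ℝ :=
  ind (0 ≤ x₁ ∧ x₁ ≤ x₂ ∧ x₂ ≤ 1) * ind (1 < y₁ ∧ y₁ ≤ y₂ ∧ y₂ ≤ 2) +
  ind (0 ≤ x₂ ∧ x₂ < x₁ ∧ x₁ ≤ 1) * ind (1 < y₂ ∧ y₂ < y₁ ∧ y₁ ≤ 2) +
  ind (1 < x₁ ∧ x₁ ≤ x₂ ∧ x₂ ≤ 2) * ind (0 ≤ y₁ ∧ y₁ ≤ y₂ ∧ y₂ ≤ 1) +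
  ind (1 < x₂ ∧ x₂ < x₁ ∧ x₁ ≤ 2) * ind (0 ≤ y₂ ∧ y₂ < y₁ ∧ y₁ ≤ 1)

/-! Each of the four summands of `fdens` is supported where the patterns of `(x₁, x₂)` and
`(y₁, y₂)` agree, so the law of `(X₁, X₂, Y₁, Y₂)` gives no mass to the set where they differ. -/

theorem withDensity_compl_eq_zero {α : Type*} [MeasurableSpace α] (μ : Measure α)
    {f : α → ENNReal} {s : Set α} (hs : MeasurableSet s) (hf : ∀ x ∉ s, f x = 0) :
    μ.withDensity f sᶜ = 0 := by
  rw [withDensity_apply _ hs.compl, setLIntegral_congr_fun hs.compl hf, lintegral_zero]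

theorem ind_mul_ind_eq_zero {P Q : Prop} (h : P → ¬Q) : ind P * ind Q = 0 := by
  by_cases hP : P <;> simp [ind, hP, h]

def samePattern : Set (ℝ × ℝ × ℝ × ℝ) :=
  {p | (p.1 ≤ p.2.1 ∧ p.2.2.1 ≤ p.2.2.2) ∨ (p.2.1 < p.1 ∧ p.2.2.2 < p.2.2.1)}

theorem measurableSet_samePattern : MeasurableSet samePattern := by
  unfold samePattern
  measurability

theorem fdens_eq_zero_of_notMem_samePattern {p : ℝ × ℝ × ℝ × ℝ} (hp : p ∉ samePattern) :
    fdens p.1 p.2.1 p.2.2.1 p.2.2.2 = 0 := by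
  simp only [samePattern, Set.mem_ofPred_eq, not_or, not_and, not_le, not_lt] at hp
  obtain ⟨hinc, hdec⟩ := hp
  rw [fdens, ind_mul_ind_eq_zero fun hx hy => (hinc hx.2.1).not_ge hy.2.1,
    ind_mul_ind_eq_zero fun hx hy => (hdec hx.2.1).not_gt hy.2.1,
    ind_mul_ind_eq_zero fun hx hy => (hinc hx.2.1).not_ge hy.2.1,
    ind_mul_ind_eq_zero fun hx hy => (hdec hx.2.1).not_gt hy.2.1]
  norm_num

/-- Under the density `f`, the ordinal patterns of `(X₁,X₂)` and `(Y₁,Y₂)` coincide a.s. -/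
theorem coincident_patterns_prob_one {Ω : Type*} [MeasurableSpace Ω]
    (ℙ : Measure Ω) [IsProbabilityMeasure ℙ] (X₁ X₂ Y₁ Y₂ : Ω → ℝ)
    (hV : Measurable fun ω => (X₁ ω, X₂ ω, Y₁ ω, Y₂ ω))
    (hlaw : Measure.map (fun ω => (X₁ ω, X₂ ω, Y₁ ω, Y₂ ω)) ℙ =
      volume.withDensity (fun p : ℝ × ℝ × ℝ × ℝ =>
        ENNReal.ofReal (fdens p.1 p.2.1 p.2.2.1 p.2.2.2))) :
    ℙ {ω | (X₁ ω ≤ X₂ ω ∧ Y₁ ω ≤ Y₂ ω) ∨ (X₂ ω < X₁ ω ∧ Y₂ ω < Y₁ ω)} = 1 := by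
  have hS := measurableSet_samePattern
  change ℙ ((fun ω => (X₁ ω, X₂ ω, Y₁ ω, Y₂ ω)) ⁻¹' samePattern) = 1
  rw [← prob_compl_eq_zero_iff (hV hS), ← Set.preimage_compl, ← Measure.map_apply hV hS.compl,
    hlaw]
  exact withDensity_compl_eq_zero _ hS fun p hp => by
    rw [fdens_eq_zero_of_notMem_samePattern hp, ENNReal.ofReal_zero]
end

section
/- Let (X,Y) have the density f and (X*,Y*) the density f* from the counterexample (f as in the paper, f* its modification swapping the y-blocks of the first and fourth summands). Then the joint cumulative distribution functions satisfy F_{(X,Y)}(z) ≤ F_{(X*,Y*)}(z) for all z ∈ ℝ⁴, i.e., P(X_1≤z_1, X_2≤z_2, Y_1≤z_3, Y_2≤z_4) ≤ P(X*_1≤z_1, X*_2≤z_2, Y*_1≤z_3, Y*_2≤z_4). -/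
open MeasureTheory

noncomputable def fstar (x₁ x₂ y₁ y₂ : ℝ) : ℝ :=
  ind (0 ≤ x₁ ∧ x₁ ≤ x₂ ∧ x₂ ≤ 1) * ind (0 ≤ y₂ ∧ y₂ < y₁ ∧ y₁ ≤ 1) +
  ind (0 ≤ x₂ ∧ x₂ < x₁ ∧ x₁ ≤ 1) * ind (1 < y₂ ∧ y₂ < y₁ ∧ y₁ ≤ 2) +
  ind (1 < x₁ ∧ x₁ ≤ x₂ ∧ x₂ ≤ 2) * ind (0 ≤ y₁ ∧ y₁ ≤ y₂ ∧ y₂ ≤ 1) +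
  ind (1 < x₂ ∧ x₂ < x₁ ∧ x₁ ≤ 2) * ind (1 < y₁ ∧ y₁ ≤ y₂ ∧ y₂ ≤ 2)

/-!
Both densities are sums of four terms `1_T(x₁, x₂) · 1_S(y₁, y₂)` over triangles `T, S` in the
plane, so each cdf is a sum of four products `λ(T ∩ Iic (z₁, z₂)) · λ(S ∩ Iic (z₃, z₄))`. Two of
the terms are shared; in the other two, `f` pairs the large `x`-factor with the small `y`-factor
and vice versa, whereas `f*` pairs large with large, so the rearrangement inequality gives the
claim. Which factor is larger follows from the map `(a, b) ↦ (b - 1, a - 1)`, which preserves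
area and carries `(1, 2]²`-triangles into `[0, 1]²`-triangles (up to the null diagonal), together
with the fact that a quadrant meeting a triangle in `(1, 2]²` contains all of `[0, 1]²`.
-/

open Set
open scoped ENNReal

lemma mul_add_mul_le_mul_add_mul_of_canonicallyOrdered {R : Type*} [CommSemiring R]
    [PartialOrder R] [CanonicallyOrderedAdd R] {a b c d : R} (hab : a ≤ b) (hcd : c ≤ d) :
    a * d + b * c ≤ a * c + b * d := by
  obtain ⟨t, rfl⟩ := exists_add_of_le hab
  obtain ⟨s, rfl⟩ := exists_add_of_le hcd
  calc a * (c + s) + (a + t) * c ≤ a * (c + s) + (a + t) * c + t * s := le_self_add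
    _ = a * c + (a + t) * (c + s) := by ring

lemma measure_inter_le_of_measure_le {α : Type*} [MeasurableSpace α] {μ : Measure α}
    {S T B : Set α} (hST : μ S ≤ μ T) (hTB : (S ∩ B).Nonempty → T ⊆ B) :
    μ (S ∩ B) ≤ μ (T ∩ B) := by
  rcases (S ∩ B).eq_empty_or_nonempty with h | h
  · simp [h]
  · rw [inter_eq_left.2 (hTB h)]
    exact (measure_mono inter_subset_left).trans hST

lemma measure_prod_diagonal_eq_zero {α : Type*} [MeasurableSpace α] [MeasurableEq α]
    (μ ν : Measure α) [SFinite ν] [NullSingletonClass ν] : (μ.prod ν) (diagonal α) = 0 := by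
  rw [Measure.measure_prod_null measurableSet_diagonal]
  exact Filter.Eventually.of_forall fun x => by simp [diagonal]

section Blocks

variable {α β γ : Type*}

def blockSet (T : Set (α × β)) (S : Set γ) : Set (α × β × γ) :=
  {p | (p.1, p.2.1) ∈ T ∧ p.2.2 ∈ S}

lemma blockSet_inter_Iic [Preorder α] [Preorder β] [Preorder γ] (T : Set (α × β)) (S : Set γ)
    (a : α) (b : β) (c : γ) :
    blockSet T S ∩ Iic (a, b, c) = blockSet (T ∩ Iic (a, b)) (S ∩ Iic c) := by
  ext p
  simp only [blockSet, mem_inter_iff, mem_ofPred_eq, mem_Iic, Prod.le_def]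
  tauto

lemma measurableSet_blockSet [MeasurableSpace α] [MeasurableSpace β] [MeasurableSpace γ]
    {T : Set (α × β)} {S : Set γ} (hT : MeasurableSet T) (hS : MeasurableSet S) :
    MeasurableSet (blockSet T S) :=
  ((measurable_fst.prodMk measurable_snd.fst) hT).inter (measurable_snd.snd hS)

variable [MeasureSpace α] [MeasureSpace β] [MeasureSpace γ]

lemma volume_blockSet [SFinite (volume : Measure α)] [SFinite (volume : Measure β)]
    [SFinite (volume : Measure γ)] (T : Set (α × β)) (S : Set γ) :
    volume (blockSet T S) = volume T * volume S := by
  rw [Measure.volume_eq_prod, Measure.volume_eq_prod, ← Measure.prodAssoc_prod,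
    MeasurableEquiv.map_apply]
  exact Measure.prod_prod T S

lemma withDensity_indicator_blockSet_Iic [Preorder α] [Preorder β] [Preorder γ]
    [SFinite (volume : Measure α)] [SFinite (volume : Measure β)]
    [SFinite (volume : Measure γ)] {T : Set (α × β)} {S : Set γ} (hT : MeasurableSet T)
    (hS : MeasurableSet S) (a : α) (b : β) (c : γ) :
    volume.withDensity ((blockSet T S).indicator 1) (Iic (a, b, c)) =
      volume (T ∩ Iic (a, b)) * volume (S ∩ Iic c) := by
  rw [withDensity_indicator_one (measurableSet_blockSet hT hS),
    Measure.restrict_apply' (measurableSet_blockSet hT hS), inter_comm, blockSet_inter_Iic,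
    volume_blockSet]

lemma withDensity_add_indicator_blockSet_Iic [Preorder α] [Preorder β] [Preorder γ]
    [SFinite (volume : Measure α)] [SFinite (volume : Measure β)]
    [SFinite (volume : Measure γ)] (f : α × β × γ → ℝ≥0∞) {T : Set (α × β)} {S : Set γ}
    (hT : MeasurableSet T) (hS : MeasurableSet S) (a : α) (b : β) (c : γ) :
    volume.withDensity (f + (blockSet T S).indicator 1) (Iic (a, b, c)) =
      volume.withDensity f (Iic (a, b, c)) + volume (T ∩ Iic (a, b)) * volume (S ∩ Iic c) := by
  rw [withDensity_add_right _ (measurable_one.indicator (measurableSet_blockSet hT hS)),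
    Measure.add_apply, withDensity_indicator_blockSet_Iic hT hS]

end Blocks

-- Subscript `0` / `1`: the triangle lies in `[0,1]²` / `(1,2]²`; upper / lower: above / below the
-- diagonal, which belongs to the upper triangle.
def upperTriangle₀ : Set (ℝ × ℝ) := {q | 0 ≤ q.1 ∧ q.1 ≤ q.2 ∧ q.2 ≤ 1}
def lowerTriangle₀ : Set (ℝ × ℝ) := {q | 0 ≤ q.2 ∧ q.2 < q.1 ∧ q.1 ≤ 1}
def upperTriangle₁ : Set (ℝ × ℝ) := {q | 1 < q.1 ∧ q.1 ≤ q.2 ∧ q.2 ≤ 2}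
def lowerTriangle₁ : Set (ℝ × ℝ) := {q | 1 < q.2 ∧ q.2 < q.1 ∧ q.1 ≤ 2}

lemma measurableSet_upperTriangle₀ : MeasurableSet upperTriangle₀ := by
  unfold upperTriangle₀; measurability
lemma measurableSet_lowerTriangle₀ : MeasurableSet lowerTriangle₀ := by
  unfold lowerTriangle₀; measurability
lemma measurableSet_upperTriangle₁ : MeasurableSet upperTriangle₁ := by
  unfold upperTriangle₁; measurability
lemma measurableSet_lowerTriangle₁ : MeasurableSet lowerTriangle₁ := by
  unfold lowerTriangle₁; measurability

lemma ind_mul_ind_nonneg (P Q : Prop) : 0 ≤ ind P * ind Q := by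
  unfold ind; split_ifs <;> norm_num

lemma ofReal_ind_mul_ind {α β γ : Type*} (T : Set (α × β)) (S : Set γ) (p : α × β × γ) :
    ENNReal.ofReal (ind ((p.1, p.2.1) ∈ T) * ind (p.2.2 ∈ S)) = (blockSet T S).indicator 1 p := by
  by_cases hT : (p.1, p.2.1) ∈ T <;> by_cases hS : p.2.2 ∈ S <;> simp [ind, blockSet, hT, hS]

lemma ofReal_add_four {a b c d : ℝ} (ha : 0 ≤ a) (hb : 0 ≤ b) (hc : 0 ≤ c) (hd : 0 ≤ d) :
    ENNReal.ofReal (a + b + c + d) =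
      ENNReal.ofReal a + ENNReal.ofReal b + ENNReal.ofReal c + ENNReal.ofReal d := by
  rw [ENNReal.ofReal_add (by positivity) hd, ENNReal.ofReal_add (by positivity) hc,
    ENNReal.ofReal_add ha hb]

lemma ofReal_fdens :
    (fun p : ℝ × ℝ × ℝ × ℝ => ENNReal.ofReal (fdens p.1 p.2.1 p.2.2.1 p.2.2.2)) =
      (blockSet upperTriangle₀ upperTriangle₁).indicator 1 +
      (blockSet lowerTriangle₀ lowerTriangle₁).indicator 1 +
      (blockSet upperTriangle₁ upperTriangle₀).indicator 1 +
      (blockSet lowerTriangle₁ lowerTriangle₀).indicator 1 := by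
  funext p
  simp only [Pi.add_apply, ← ofReal_ind_mul_ind]
  rw [← ofReal_add_four (ind_mul_ind_nonneg _ _) (ind_mul_ind_nonneg _ _)
    (ind_mul_ind_nonneg _ _) (ind_mul_ind_nonneg _ _)]
  rfl

lemma ofReal_fstar :
    (fun p : ℝ × ℝ × ℝ × ℝ => ENNReal.ofReal (fstar p.1 p.2.1 p.2.2.1 p.2.2.2)) =
      (blockSet upperTriangle₀ lowerTriangle₀).indicator 1 +
      (blockSet lowerTriangle₀ lowerTriangle₁).indicator 1 +
      (blockSet upperTriangle₁ upperTriangle₀).indicator 1 +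
      (blockSet lowerTriangle₁ upperTriangle₁).indicator 1 := by
  funext p
  simp only [Pi.add_apply, ← ofReal_ind_mul_ind]
  rw [← ofReal_add_four (ind_mul_ind_nonneg _ _) (ind_mul_ind_nonneg _ _)
    (ind_mul_ind_nonneg _ _) (ind_mul_ind_nonneg _ _)]
  rfl

lemma withDensity_fdens_Iic (z₁ z₂ z₃ z₄ : ℝ) :
    volume.withDensity
        (fun p : ℝ × ℝ × ℝ × ℝ => ENNReal.ofReal (fdens p.1 p.2.1 p.2.2.1 p.2.2.2))
        (Iic (z₁, z₂, z₃, z₄)) =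
      (volume (lowerTriangle₁ ∩ Iic (z₁, z₂)) * volume (lowerTriangle₀ ∩ Iic (z₃, z₄)) +
        volume (upperTriangle₀ ∩ Iic (z₁, z₂)) * volume (upperTriangle₁ ∩ Iic (z₃, z₄))) +
      (volume (lowerTriangle₀ ∩ Iic (z₁, z₂)) * volume (lowerTriangle₁ ∩ Iic (z₃, z₄)) +
        volume (upperTriangle₁ ∩ Iic (z₁, z₂)) * volume (upperTriangle₀ ∩ Iic (z₃, z₄))) := by
  simp only [ofReal_fdens, withDensity_add_indicator_blockSet_Iic,
    withDensity_indicator_blockSet_Iic, measurableSet_upperTriangle₀,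
    measurableSet_lowerTriangle₀, measurableSet_upperTriangle₁, measurableSet_lowerTriangle₁]
  ring

lemma withDensity_fstar_Iic (z₁ z₂ z₃ z₄ : ℝ) :
    volume.withDensity
        (fun p : ℝ × ℝ × ℝ × ℝ => ENNReal.ofReal (fstar p.1 p.2.1 p.2.2.1 p.2.2.2))
        (Iic (z₁, z₂, z₃, z₄)) =
      (volume (lowerTriangle₁ ∩ Iic (z₁, z₂)) * volume (upperTriangle₁ ∩ Iic (z₃, z₄)) +
        volume (upperTriangle₀ ∩ Iic (z₁, z₂)) * volume (lowerTriangle₀ ∩ Iic (z₃, z₄))) +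
      (volume (lowerTriangle₀ ∩ Iic (z₁, z₂)) * volume (lowerTriangle₁ ∩ Iic (z₃, z₄)) +
        volume (upperTriangle₁ ∩ Iic (z₁, z₂)) * volume (upperTriangle₀ ∩ Iic (z₃, z₄))) := by
  simp only [ofReal_fstar, withDensity_add_indicator_blockSet_Iic,
    withDensity_indicator_blockSet_Iic, measurableSet_upperTriangle₀,
    measurableSet_lowerTriangle₀, measurableSet_upperTriangle₁, measurableSet_lowerTriangle₁]
  ring

lemma measurePreserving_swap_sub_one :
    MeasurePreserving (fun q : ℝ × ℝ => (q.2 - 1, q.1 - 1)) :=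
  (measurePreserving_sub_right volume ((1 : ℝ), (1 : ℝ))).comp Measure.measurePreserving_swap

lemma volume_lowerTriangle₁_le : volume lowerTriangle₁ ≤ volume upperTriangle₀ :=
  calc volume lowerTriangle₁
      ≤ volume ((fun q : ℝ × ℝ => (q.2 - 1, q.1 - 1)) ⁻¹' upperTriangle₀) := by
        refine measure_mono fun q ⟨hq₂, hq₂₁, hq₁⟩ => ?_
        simp only [upperTriangle₀, mem_preimage, mem_ofPred_eq]
        refine ⟨?_, ?_, ?_⟩ <;> linarith
    _ = volume upperTriangle₀ :=
        measurePreserving_swap_sub_one.measure_preimage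
          measurableSet_upperTriangle₀.nullMeasurableSet

lemma volume_upperTriangle₁_le : volume upperTriangle₁ ≤ volume lowerTriangle₀ :=
  calc volume upperTriangle₁
      ≤ volume ((fun q : ℝ × ℝ => (q.2 - 1, q.1 - 1)) ⁻¹' (lowerTriangle₀ ∪ diagonal ℝ)) := by
        refine measure_mono fun q ⟨hq₁, hq₁₂, hq₂⟩ => ?_
        simp only [lowerTriangle₀, diagonal, mem_preimage, mem_union, mem_ofPred_eq]
        rcases hq₁₂.lt_or_eq with h | h
        · exact Or.inl ⟨by linarith, by linarith, by linarith⟩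
        · exact Or.inr (by rw [h])
    _ = volume (lowerTriangle₀ ∪ diagonal ℝ) :=
        measurePreserving_swap_sub_one.measure_preimage
          (measurableSet_lowerTriangle₀.union measurableSet_diagonal).nullMeasurableSet
    _ ≤ volume lowerTriangle₀ := by
        refine (measure_union_le _ _).trans_eq ?_
        rw [Measure.volume_eq_prod, measure_prod_diagonal_eq_zero, add_zero]

lemma volume_lowerTriangle₁_inter_Iic_le (a b : ℝ) :
    volume (lowerTriangle₁ ∩ Iic (a, b)) ≤ volume (upperTriangle₀ ∩ Iic (a, b)) :=
  measure_inter_le_of_measure_le volume_lowerTriangle₁_le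
    fun ⟨q, ⟨hq₂, hq₂₁, _⟩, hqa, hqb⟩ r ⟨_, hr₁₂, hr₂⟩ => ⟨by linarith, by linarith⟩

lemma volume_upperTriangle₁_inter_Iic_le (a b : ℝ) :
    volume (upperTriangle₁ ∩ Iic (a, b)) ≤ volume (lowerTriangle₀ ∩ Iic (a, b)) :=
  measure_inter_le_of_measure_le volume_upperTriangle₁_le
    fun ⟨q, ⟨hq₁, hq₁₂, _⟩, hqa, hqb⟩ r ⟨_, hr₂₁, hr₁⟩ => ⟨by linarith, by linarith⟩

theorem cdf_le_cdf_star_general {Ω : Type*} [MeasurableSpace Ω]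
    (ℙ : Measure Ω)
    (X₁ X₂ Y₁ Y₂ Xs₁ Xs₂ Ys₁ Ys₂ : Ω → ℝ)
    (hV : Measurable fun ω => (X₁ ω, X₂ ω, Y₁ ω, Y₂ ω))
    (hW : Measurable fun ω => (Xs₁ ω, Xs₂ ω, Ys₁ ω, Ys₂ ω))
    (hlaw : Measure.map (fun ω => (X₁ ω, X₂ ω, Y₁ ω, Y₂ ω)) ℙ =
      volume.withDensity (fun p : ℝ × ℝ × ℝ × ℝ =>
        ENNReal.ofReal (fdens p.1 p.2.1 p.2.2.1 p.2.2.2)))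
    (hlaws : Measure.map (fun ω => (Xs₁ ω, Xs₂ ω, Ys₁ ω, Ys₂ ω)) ℙ =
      volume.withDensity (fun p : ℝ × ℝ × ℝ × ℝ =>
        ENNReal.ofReal (fstar p.1 p.2.1 p.2.2.1 p.2.2.2))) :
    ∀ z₁ z₂ z₃ z₄ : ℝ,
      ℙ {ω | X₁ ω ≤ z₁ ∧ X₂ ω ≤ z₂ ∧ Y₁ ω ≤ z₃ ∧ Y₂ ω ≤ z₄} ≤
        ℙ {ω | Xs₁ ω ≤ z₁ ∧ Xs₂ ω ≤ z₂ ∧ Ys₁ ω ≤ z₃ ∧ Ys₂ ω ≤ z₄} := by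
  intro z₁ z₂ z₃ z₄
  have hcdf := Measure.map_apply (μ := ℙ) hV (measurableSet_Iic (a := (z₁, z₂, z₃, z₄)))
  have hcdf_star := Measure.map_apply (μ := ℙ) hW (measurableSet_Iic (a := (z₁, z₂, z₃, z₄)))
  rw [hlaw, withDensity_fdens_Iic] at hcdf
  rw [hlaws, withDensity_fstar_Iic] at hcdf_star
  refine hcdf.symm.trans_le (le_trans ?_ hcdf_star.le)
  gcongr ?_ + _
  exact mul_add_mul_le_mul_add_mul_of_canonicallyOrdered
    (volume_lowerTriangle₁_inter_Iic_le z₁ z₂) (volume_upperTriangle₁_inter_Iic_le z₃ z₄)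

/-- The joint cdf of a vector with density `f` is pointwise dominated by that of a vector
with density `f*`. -/
theorem cdf_le_cdf_star {Ω : Type*} [MeasurableSpace Ω]
    (ℙ : Measure Ω) [IsProbabilityMeasure ℙ]
    (X₁ X₂ Y₁ Y₂ Xs₁ Xs₂ Ys₁ Ys₂ : Ω → ℝ)
    (hV : Measurable fun ω => (X₁ ω, X₂ ω, Y₁ ω, Y₂ ω))
    (hW : Measurable fun ω => (Xs₁ ω, Xs₂ ω, Ys₁ ω, Ys₂ ω))
    (hlaw : Measure.map (fun ω => (X₁ ω, X₂ ω, Y₁ ω, Y₂ ω)) ℙ =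
      volume.withDensity (fun p : ℝ × ℝ × ℝ × ℝ =>
        ENNReal.ofReal (fdens p.1 p.2.1 p.2.2.1 p.2.2.2)))
    (hlaws : Measure.map (fun ω => (Xs₁ ω, Xs₂ ω, Ys₁ ω, Ys₂ ω)) ℙ =
      volume.withDensity (fun p : ℝ × ℝ × ℝ × ℝ =>
        ENNReal.ofReal (fstar p.1 p.2.1 p.2.2.1 p.2.2.2))) :
    ∀ z₁ z₂ z₃ z₄ : ℝ,
      ℙ {ω | X₁ ω ≤ z₁ ∧ X₂ ω ≤ z₂ ∧ Y₁ ω ≤ z₃ ∧ Y₂ ω ≤ z₄} ≤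
        ℙ {ω | Xs₁ ω ≤ z₁ ∧ Xs₂ ω ≤ z₂ ∧ Ys₁ ω ≤ z₃ ∧ Ys₂ ω ≤ z₄} :=
  cdf_le_cdf_star_general ℙ X₁ X₂ Y₁ Y₂ Xs₁ Xs₂ Ys₁ Ys₂ hV hW hlaw hlaws
end

section
/- There exist random vectors (X,Y) and (X*,Y*) in ℝ² × ℝ² with X =_d X*, Y =_d Y*, stationary marginals (X_1 =_d X_2, Y_1 =_d Y_2), continuous marginal distributions, satisfying the concordance ordering (X,Y) ≼_C (X*,Y*) (pointwise domination of both the joint cdf and the joint survival function), but with OPD_2(X,Y) > OPD_2(X*,Y*). Hence ordinal pattern dependence does not respect concordance ordering. -/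
open MeasureTheory

def IsOrdPattern {d : ℕ} (x : Fin d → ℝ) (π : Equiv.Perm (Fin d)) : Prop :=
  ∀ i j, π i < π j ↔ (x i < x j ∨ (x i = x j ∧ i < j))

noncomputable def OPD {Ω : Type*} [MeasurableSpace Ω] (ℙ : Measure Ω) {d : ℕ}
    (Pat : (Fin d → ℝ) → Equiv.Perm (Fin d)) (X Y : Ω → Fin d → ℝ) : ℝ :=
  ((ℙ {ω | Pat (X ω) = Pat (Y ω)}).toReal -
      ∑ π : Equiv.Perm (Fin d),
        (ℙ {ω | Pat (X ω) = π}).toReal * (ℙ {ω | Pat (Y ω) = π}).toReal) /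
    (1 - ∑ π : Equiv.Perm (Fin d),
        (ℙ {ω | Pat (X ω) = π}).toReal * (ℙ {ω | Pat (Y ω) = π}).toReal)

/-!
Let `U` be atomless and `(X, Y) = p + U • 1`, the atom `p ∈ ℝ² × ℝ²` being chosen uniformly from a
finite list. A diagonal shift changes no ordinal pattern, so the patterns of `X` and `Y` are
constant on each atom. For two atoms `p, q` and a threshold `z`, the events `{p + U • 1 ≤ z}` and
`{q + U • 1 ≤ z}` intersect in `{p ⊔ q + U • 1 ≤ z}` and their union lies in
`{p ⊓ q + U • 1 ≤ z}`; so replacing `p, q` by `p ⊓ q, p ⊔ q` increases the joint distribution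
function, and dually the joint survival function. For the pairs `(1,2 ; 4,5), (5,4 ; 2,1)` and
`(2,1 ; 5,4), (4,5 ; 1,2)` this exchange keeps the law of `X` and permutes the atoms of `Y`, but the
patterns of `X` and `Y` agree on every original atom (OPD = 1) and on no exchanged one (OPD = -1).
-/

open Set Topology
open scoped ENNReal

section ShiftMixture

variable {E F : Type*} [NormedAddCommGroup E] [NormedSpace ℝ E] [MeasurableSpace E] [One E]
  [NormedAddCommGroup F] [NormedSpace ℝ F] [MeasurableSpace F] [One F]
  {ι : Type*} [Fintype ι] (ν : Measure ℝ)

noncomputable def shiftMixture (x : ι → E) : Measure E :=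
  (Fintype.card ι : ℝ≥0∞)⁻¹ • ∑ k, ν.map fun t => x k + t • (1 : E)

lemma shiftMixture_comp_equiv (x : ι → E) (σ : ι ≃ ι) :
    shiftMixture ν (x ∘ σ) = shiftMixture ν x := by
  simp only [shiftMixture, Function.comp_apply,
    Equiv.sum_comp σ fun k => ν.map fun t => x k + t • (1 : E)]

variable [BorelSpace E] [NeZero (1 : E)] [BorelSpace F] [NeZero (1 : F)]

lemma measurableEmbedding_add_smul_one (x : E) :
    MeasurableEmbedding fun t : ℝ => x + t • (1 : E) := by
  have h : IsClosedEmbedding (LinearMap.toSpanSingleton ℝ E 1) :=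
    LinearMap.isClosedEmbedding_of_injective (by simp [LinearMap.ker_toSpanSingleton])
  exact ((Homeomorph.addLeft x).isClosedEmbedding.comp h).measurableEmbedding

lemma shiftMixture_apply (x : ι → E) (S : Set E) :
    shiftMixture ν x S = (Fintype.card ι : ℝ≥0∞)⁻¹ * ∑ k, ν {t | x k + t • (1 : E) ∈ S} := by
  simp only [shiftMixture, Measure.smul_apply, Measure.coe_finsetSum, Finset.sum_apply,
    (measurableEmbedding_add_smul_one _).map_apply, smul_eq_mul]
  rfl

instance [IsProbabilityMeasure ν] [Nonempty ι] (x : ι → E) :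
    IsProbabilityMeasure (shiftMixture ν x) :=
  ⟨by simp [shiftMixture_apply, ENNReal.inv_mul_cancel]⟩

instance [NullSingletonClass ν] (x : ι → E) : NullSingletonClass (shiftMixture ν x) where
  measure_singleton r := by
    rw [shiftMixture_apply]
    refine mul_eq_zero_of_right _ (Finset.sum_eq_zero fun k _ => ?_)
    exact (subsingleton_singleton.preimage
      (measurableEmbedding_add_smul_one (x k)).injective).measure_zero ν

lemma map_shiftMixture {g : E → F} (hg : Measurable g)
    (hg1 : ∀ ω (t : ℝ), g (ω + t • 1) = g ω + t • 1) (x : ι → E) :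
    (shiftMixture ν x).map g = shiftMixture ν (g ∘ x) := by
  ext S hS
  simp [Measure.map_apply hg hS, shiftMixture_apply, hg1]

lemma shiftMixture_setOf_eq_eq_zero [NullSingletonClass ν] {g : E → ℝ} (hg : Measurable g)
    (hg1 : ∀ ω (t : ℝ), g (ω + t • 1) = g ω + t • 1) (x : ι → E) (r : ℝ) :
    shiftMixture ν x {ω | g ω = r} = 0 := by
  change shiftMixture ν x (g ⁻¹' {r}) = 0
  rw [← Measure.map_apply hg (measurableSet_singleton r), map_shiftMixture ν hg hg1]
  exact measure_singleton r

lemma toReal_shiftMixture_apply_of_invariant [IsProbabilityMeasure ν] (x : ι → E) {S : Set E}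
    (hS : ∀ ω (t : ℝ), ω + t • 1 ∈ S ↔ ω ∈ S) :
    (shiftMixture ν x S).toReal = (∑ k, S.indicator 1 (x k)) / Fintype.card ι := by
  have hk : ∀ k, ν {t | x k + t • (1 : E) ∈ S} = ENNReal.ofReal (S.indicator 1 (x k)) := by
    intro k
    by_cases h : x k ∈ S <;> simp [hS, h]
  simp only [shiftMixture_apply, hk]
  rw [ENNReal.toReal_mul, ENNReal.toReal_inv, ENNReal.toReal_sum fun _ _ => ENNReal.ofReal_ne_top]
  simp [div_eq_inv_mul, indicator_nonneg]

end ShiftMixture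

lemma measure_add_le_measure_add_inter {β : Type*} {_ : MeasurableSpace β} (μ : Measure β)
    {s t u : Set β} (ht : MeasurableSet t) (hu : s ∪ t ⊆ u) :
    μ s + μ t ≤ μ u + μ (s ∩ t) := by
  rw [← measure_union_add_inter s ht]
  gcongr

section Concordance

variable {F : Type*} [NormedAddCommGroup F] [NormedSpace ℝ F] [MeasurableSpace F] [BorelSpace F]
  [One F] [NeZero (1 : F)] [Lattice F] [IsOrderedAddMonoid F] [OrderClosedTopology F]
  (ν : Measure ℝ)

lemma measure_add_smul_one_le_add_le_inf_sup (p q z : F) :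
    ν {t | p + t • 1 ≤ z} + ν {t | q + t • 1 ≤ z} ≤
      ν {t | p ⊓ q + t • 1 ≤ z} + ν {t | p ⊔ q + t • 1 ≤ z} := by
  have hsup : {t : ℝ | p ⊔ q + t • 1 ≤ z} = {t | p + t • 1 ≤ z} ∩ {t | q + t • 1 ≤ z} := by
    ext t; simp [sup_add]
  rw [hsup]
  refine measure_add_le_measure_add_inter ν
    ((measurableEmbedding_add_smul_one q).measurable measurableSet_Iic) ?_
  rintro t (h | h)
  · exact le_trans (add_le_add_left inf_le_left _) h
  · exact le_trans (add_le_add_left inf_le_right _) h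

lemma measure_le_add_smul_one_add_le_inf_sup (p q z : F) :
    ν {t | z ≤ p + t • 1} + ν {t | z ≤ q + t • 1} ≤
      ν {t | z ≤ p ⊓ q + t • 1} + ν {t | z ≤ p ⊔ q + t • 1} := by
  have hinf : {t : ℝ | z ≤ p ⊓ q + t • 1} = {t | z ≤ p + t • 1} ∩ {t | z ≤ q + t • 1} := by
    ext t; simp [inf_add]
  rw [hinf]
  refine (measure_add_le_measure_add_inter ν
    ((measurableEmbedding_add_smul_one q).measurable measurableSet_Ici) ?_).trans_eq (add_comm _ _)
  rintro t (h | h)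
  · exact le_trans h (add_le_add_left le_sup_left _)
  · exact le_trans h (add_le_add_left le_sup_right _)

def infSupTransfer {ι : Type*} (p : ι × Fin 2 → F) : ι × Fin 2 → F :=
  fun k => ![p (k.1, 0) ⊓ p (k.1, 1), p (k.1, 0) ⊔ p (k.1, 1)] k.2

variable {ι : Type*} [Fintype ι]

lemma shiftMixture_Iic_le_infSupTransfer (p : ι × Fin 2 → F) (z : F) :
    shiftMixture ν p (Iic z) ≤ shiftMixture ν (infSupTransfer p) (Iic z) := by
  simp only [shiftMixture_apply, Fintype.sum_prod_type, Fin.sum_univ_two, infSupTransfer, mem_Iic,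
    Matrix.cons_val_zero, Matrix.cons_val_one]
  gcongr _ * ?_
  exact Finset.sum_le_sum fun i _ => measure_add_smul_one_le_add_le_inf_sup ν _ _ z

lemma shiftMixture_Ici_le_infSupTransfer (p : ι × Fin 2 → F) (z : F) :
    shiftMixture ν p (Ici z) ≤ shiftMixture ν (infSupTransfer p) (Ici z) := by
  simp only [shiftMixture_apply, Fintype.sum_prod_type, Fin.sum_univ_two, infSupTransfer, mem_Ici,
    Matrix.cons_val_zero, Matrix.cons_val_one]
  gcongr _ * ?_
  exact Finset.sum_le_sum fun i _ => measure_le_add_smul_one_add_le_inf_sup ν _ _ z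

end Concordance

section OrdinalPattern

noncomputable def pattern₂ (x : Fin 2 → ℝ) : Equiv.Perm (Fin 2) :=
  if x 1 < x 0 then Equiv.swap 0 1 else 1

lemma Equiv.Perm.fin_two_eq_one_or_eq_swap (σ : Equiv.Perm (Fin 2)) :
    σ = 1 ∨ σ = Equiv.swap 0 1 := by
  revert σ; decide

lemma IsOrdPattern.eq_pattern₂ {x : Fin 2 → ℝ} {π : Equiv.Perm (Fin 2)}
    (h : IsOrdPattern x π) : π = pattern₂ x := by
  have h01 := h 0 1
  unfold pattern₂
  rcases π.fin_two_eq_one_or_eq_swap with rfl | rfl <;> split_ifs with hx <;> simp at h01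
  · rcases h01 with h01 | h01 <;> linarith
  · rfl
  · rfl
  · exact absurd (lt_of_le_of_ne h01.1 (Ne.symm h01.2)) hx

@[simp] lemma pattern₂_add_smul_one (x : Fin 2 → ℝ) (t : ℝ) :
    pattern₂ (x + t • 1) = pattern₂ x := by
  simp [pattern₂]

lemma OPD_eq_of_uniform_patterns {Ω : Type*} [MeasurableSpace Ω] (ℙ : Measure Ω) {d : ℕ}
    (Pat : (Fin d → ℝ) → Equiv.Perm (Fin d)) (X Y : Ω → Fin d → ℝ)
    (hX : ∀ π, (ℙ {ω | Pat (X ω) = π}).toReal = (d.factorial : ℝ)⁻¹)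
    (hY : ∀ π, (ℙ {ω | Pat (Y ω) = π}).toReal = (d.factorial : ℝ)⁻¹) :
    OPD ℙ Pat X Y = ((ℙ {ω | Pat (X ω) = Pat (Y ω)}).toReal - (d.factorial : ℝ)⁻¹) /
      (1 - (d.factorial : ℝ)⁻¹) := by
  have hs : ∑ π : Equiv.Perm (Fin d), (ℙ {ω | Pat (X ω) = π}).toReal *
      (ℙ {ω | Pat (Y ω) = π}).toReal = (d.factorial : ℝ)⁻¹ := by
    simp only [hX, hY, Finset.sum_const, Finset.card_univ, Fintype.card_perm, Fintype.card_fin,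
      nsmul_eq_mul]
    field_simp
  rw [OPD, hs]

end OrdinalPattern

section Example

def exampleAtoms : Fin 2 × Fin 2 → (Fin 2 → ℝ) × (Fin 2 → ℝ) := fun k =>
  ![![(![1, 2], ![4, 5]), (![5, 4], ![2, 1])], ![(![2, 1], ![5, 4]), (![4, 5], ![1, 2])]] k.1 k.2

lemma infSupTransfer_exampleAtoms :
    infSupTransfer exampleAtoms = fun k => ![![(![1, 2], ![2, 1]), (![5, 4], ![4, 5])],
      ![(![2, 1], ![1, 2]), (![4, 5], ![5, 4])]] k.1 k.2 := by
  ext ⟨i, j⟩ : 1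
  fin_cases i <;> fin_cases j <;>
    norm_num [infSupTransfer, exampleAtoms, Prod.ext_iff, funext_iff, Pi.le_def, Fin.forall_fin_two]

variable (ν : Measure ℝ)

noncomputable def exampleLaw :
    Measure (((Fin 2 → ℝ) × (Fin 2 → ℝ)) × ((Fin 2 → ℝ) × (Fin 2 → ℝ))) :=
  shiftMixture ν fun k => (exampleAtoms k, infSupTransfer exampleAtoms k)

lemma map_fst_exampleLaw : (exampleLaw ν).map Prod.fst = shiftMixture ν exampleAtoms :=
  map_shiftMixture ν measurable_fst (fun _ _ => rfl) _

lemma map_snd_exampleLaw :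
    (exampleLaw ν).map Prod.snd = shiftMixture ν (infSupTransfer exampleAtoms) :=
  map_shiftMixture ν measurable_snd (fun _ _ => rfl) _

lemma map_exampleLaw_fst_fst_eq_snd_fst :
    (exampleLaw ν).map (fun ω => ω.1.1) = (exampleLaw ν).map (fun ω => ω.2.1) := by
  rw [exampleLaw, map_shiftMixture ν (by fun_prop) (fun _ _ => rfl),
    map_shiftMixture ν (by fun_prop) (fun _ _ => rfl)]
  congr 1
  ext ⟨i, j⟩ : 1
  rw [infSupTransfer_exampleAtoms]
  fin_cases i <;> fin_cases j <;> simp [exampleAtoms]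

lemma map_exampleLaw_fst_snd_eq_snd_snd :
    (exampleLaw ν).map (fun ω => ω.1.2) = (exampleLaw ν).map (fun ω => ω.2.2) := by
  rw [exampleLaw, map_shiftMixture ν (by fun_prop) (fun _ _ => rfl),
    map_shiftMixture ν (by fun_prop) (fun _ _ => rfl),
    ← shiftMixture_comp_equiv ν _ (Equiv.addRight (0, 1))]
  congr 1
  ext ⟨i, j⟩ : 1
  rw [infSupTransfer_exampleAtoms]
  fin_cases i <;> fin_cases j <;> simp [exampleAtoms]

lemma map_exampleLaw_fst_fst_zero_eq_one :
    (exampleLaw ν).map (fun ω => ω.1.1 0) = (exampleLaw ν).map (fun ω => ω.1.1 1) := by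
  rw [exampleLaw, map_shiftMixture ν (by fun_prop) (fun _ _ => rfl),
    map_shiftMixture ν (by fun_prop) (fun _ _ => rfl),
    ← shiftMixture_comp_equiv ν _ (Equiv.addRight (1, 0))]
  congr 1
  ext ⟨i, j⟩ : 1
  fin_cases i <;> fin_cases j <;> simp [exampleAtoms]

lemma map_exampleLaw_fst_snd_zero_eq_one :
    (exampleLaw ν).map (fun ω => ω.1.2 0) = (exampleLaw ν).map (fun ω => ω.1.2 1) := by
  rw [exampleLaw, map_shiftMixture ν (by fun_prop) (fun _ _ => rfl),
    map_shiftMixture ν (by fun_prop) (fun _ _ => rfl),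
    ← shiftMixture_comp_equiv ν _ (Equiv.addRight (1, 0))]
  congr 1
  ext ⟨i, j⟩ : 1
  fin_cases i <;> fin_cases j <;> simp [exampleAtoms]

lemma exampleLaw_preimage_fst_Iic_le (z : (Fin 2 → ℝ) × (Fin 2 → ℝ)) :
    exampleLaw ν (Prod.fst ⁻¹' Iic z) ≤ exampleLaw ν (Prod.snd ⁻¹' Iic z) := by
  rw [← Measure.map_apply measurable_fst measurableSet_Iic,
    ← Measure.map_apply measurable_snd measurableSet_Iic, map_fst_exampleLaw, map_snd_exampleLaw]
  exact shiftMixture_Iic_le_infSupTransfer ν _ z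

lemma exampleLaw_preimage_fst_Ici_le (z : (Fin 2 → ℝ) × (Fin 2 → ℝ)) :
    exampleLaw ν (Prod.fst ⁻¹' Ici z) ≤ exampleLaw ν (Prod.snd ⁻¹' Ici z) := by
  rw [← Measure.map_apply measurable_fst measurableSet_Ici,
    ← Measure.map_apply measurable_snd measurableSet_Ici, map_fst_exampleLaw, map_snd_exampleLaw]
  exact shiftMixture_Ici_le_infSupTransfer ν _ z

lemma toReal_exampleLaw_pattern₂_eq [IsProbabilityMeasure ν] (π : Equiv.Perm (Fin 2)) :
    (exampleLaw ν {ω | pattern₂ ω.1.1 = π}).toReal = 2⁻¹ ∧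
    (exampleLaw ν {ω | pattern₂ ω.1.2 = π}).toReal = 2⁻¹ ∧
    (exampleLaw ν {ω | pattern₂ ω.2.1 = π}).toReal = 2⁻¹ ∧
    (exampleLaw ν {ω | pattern₂ ω.2.2 = π}).toReal = 2⁻¹ := by
  have hs : Equiv.swap (0 : Fin 2) 1 ≠ 1 := by decide
  refine ⟨?_, ?_, ?_, ?_⟩ <;>
  · rw [exampleLaw, toReal_shiftMixture_apply_of_invariant ν _ (by simp)]
    simp only [Fintype.sum_prod_type, Fin.sum_univ_two, infSupTransfer_exampleAtoms]
    rcases π.fin_two_eq_one_or_eq_swap with rfl | rfl <;>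
      norm_num [exampleAtoms, pattern₂, indicator, hs, hs.symm]

lemma toReal_exampleLaw_pattern₂_match [IsProbabilityMeasure ν] :
    (exampleLaw ν {ω | pattern₂ ω.1.1 = pattern₂ ω.1.2}).toReal = 1 ∧
    (exampleLaw ν {ω | pattern₂ ω.2.1 = pattern₂ ω.2.2}).toReal = 0 := by
  have hs : Equiv.swap (0 : Fin 2) 1 ≠ 1 := by decide
  refine ⟨?_, ?_⟩ <;>
  · rw [exampleLaw, toReal_shiftMixture_apply_of_invariant ν _ (by simp)]
    simp only [Fintype.sum_prod_type, Fin.sum_univ_two, infSupTransfer_exampleAtoms]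
    norm_num [exampleAtoms, pattern₂, indicator, hs, hs.symm]

lemma OPD_exampleLaw_snd_lt_fst [IsProbabilityMeasure ν] :
    OPD (exampleLaw ν) pattern₂ (fun ω => ω.2.1) (fun ω => ω.2.2) <
      OPD (exampleLaw ν) pattern₂ (fun ω => ω.1.1) (fun ω => ω.1.2) := by
  have h := toReal_exampleLaw_pattern₂_eq ν
  have h2 : ((Nat.factorial 2 : ℕ) : ℝ)⁻¹ = 2⁻¹ := by norm_num [Nat.factorial]
  rw [OPD_eq_of_uniform_patterns _ _ _ _ (fun π => (h π).2.2.1.trans h2.symm)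
      (fun π => (h π).2.2.2.trans h2.symm),
    OPD_eq_of_uniform_patterns _ _ _ _ (fun π => (h π).1.trans h2.symm)
      (fun π => (h π).2.1.trans h2.symm),
    (toReal_exampleLaw_pattern₂_match ν).1, (toReal_exampleLaw_pattern₂_match ν).2, h2]
  norm_num

end Example

/-- Ordinal pattern dependence does not respect concordance ordering: there are random
vectors `(X,Y)` and `(X*,Y*)` with equal marginal distributions, stationary increments and
continuous marginals, which are ordered in concordance order, but with
`OPD₂(X,Y) > OPD₂(X*,Y*)`. -/
theorem opd_does_not_respect_concordance :
    ∃ (ℙ : Measure (((Fin 2 → ℝ) × (Fin 2 → ℝ)) × ((Fin 2 → ℝ) × (Fin 2 → ℝ))))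
      (X Y Xs Ys : ((Fin 2 → ℝ) × (Fin 2 → ℝ)) × ((Fin 2 → ℝ) × (Fin 2 → ℝ)) → Fin 2 → ℝ),
      IsProbabilityMeasure ℙ ∧
      Measurable X ∧ Measurable Y ∧ Measurable Xs ∧ Measurable Ys ∧
      -- equality in distribution
      Measure.map X ℙ = Measure.map Xs ℙ ∧
      Measure.map Y ℙ = Measure.map Ys ℙ ∧
      -- stationary marginals
      Measure.map (fun ω => X ω 0) ℙ = Measure.map (fun ω => X ω 1) ℙ ∧
      Measure.map (fun ω => Y ω 0) ℙ = Measure.map (fun ω => Y ω 1) ℙ ∧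
      -- continuous marginal distributions (no atoms)
      (∀ (i : Fin 2) (r : ℝ),
        ℙ {ω | X ω i = r} = 0 ∧ ℙ {ω | Y ω i = r} = 0 ∧
        ℙ {ω | Xs ω i = r} = 0 ∧ ℙ {ω | Ys ω i = r} = 0) ∧
      -- concordance ordering: cdf domination
      (∀ a b : Fin 2 → ℝ,
        ℙ {ω | (∀ i, X ω i ≤ a i) ∧ (∀ i, Y ω i ≤ b i)} ≤
          ℙ {ω | (∀ i, Xs ω i ≤ a i) ∧ (∀ i, Ys ω i ≤ b i)}) ∧
      -- concordance ordering: survival function domination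
      (∀ a b : Fin 2 → ℝ,
        ℙ {ω | (∀ i, a i ≤ X ω i) ∧ (∀ i, b i ≤ Y ω i)} ≤
          ℙ {ω | (∀ i, a i ≤ Xs ω i) ∧ (∀ i, b i ≤ Ys ω i)}) ∧
      -- but ordinal pattern dependence is strictly larger for (X, Y)
      (∀ Pat : (Fin 2 → ℝ) → Equiv.Perm (Fin 2), (∀ x, IsOrdPattern x (Pat x)) →
        OPD ℙ Pat Xs Ys < OPD ℙ Pat X Y) := by
  let ν : Measure ℝ := volume.restrict (Icc 0 1)
  have : IsProbabilityMeasure ν := ⟨by simp [ν]⟩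
  refine ⟨exampleLaw ν, fun ω => ω.1.1, fun ω => ω.1.2, fun ω => ω.2.1, fun ω => ω.2.2,
    by rw [exampleLaw]; infer_instance, by fun_prop, by fun_prop, by fun_prop, by fun_prop,
    map_exampleLaw_fst_fst_eq_snd_fst ν, map_exampleLaw_fst_snd_eq_snd_snd ν,
    map_exampleLaw_fst_fst_zero_eq_one ν, map_exampleLaw_fst_snd_zero_eq_one ν,
    fun i r => ?_, fun a b => exampleLaw_preimage_fst_Iic_le ν (a, b),
    fun a b => exampleLaw_preimage_fst_Ici_le ν (a, b), fun Pat hPat => ?_⟩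
  · refine ⟨?_, ?_, ?_, ?_⟩ <;>
      exact shiftMixture_setOf_eq_eq_zero ν (by fun_prop) (fun _ _ => rfl) _ r
  · obtain rfl : Pat = pattern₂ := funext fun x => (hPat x).eq_pattern₂
    exact OPD_exampleLaw_snd_lt_fst ν
end
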